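/- arXiv:2203.04597 — 2 statements merged into one kernel-verified Lean document; each statement's English description precedes it below -/
import Mathlib

section
/- For a weak contact metric structure (φ,Q,ξ,η,g) on M, the tensor h, defined by hX := ½([ξ,φX] - φ[ξ,X]), satisfies for every smooth vector field X: h(φX) + φ(hX) = ½([Q̃X, ξ] - Q̃[X,ξ]), where Q̃ := Q - id. -/
open scoped Manifold

noncomputable section

/-- Smooth vector fields on a manifold `M`, modelled as derivations of the algebra of smooth
real-valued functions on `M`. -/
abbrev VectorField {E : Type*} [NormedAddCommGroup E] [NormedSpace ℝ E]
    {H : Type*} [TopologicalSpace H] (I : ModelWithCorners ℝ E H)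
    (M : Type*) [TopologicalSpace M] [ChartedSpace H M] :=
  Derivation ℝ C^(⊤ : ℕ∞)⟮I, M; ℝ⟯ C^(⊤ : ℕ∞)⟮I, M; ℝ⟯

variable {E : Type*} [NormedAddCommGroup E] [NormedSpace ℝ E]
  {H : Type*} [TopologicalSpace H] {I : ModelWithCorners ℝ E H}
  {M : Type*} [TopologicalSpace M] [ChartedSpace H M]

/-- `dη(X,Y) = ½ (X(η(Y)) - Y(η(X)) - η([X,Y]))`. -/
def dEta (η : VectorField I M →ₗ[C^(⊤ : ℕ∞)⟮I, M; ℝ⟯] C^(⊤ : ℕ∞)⟮I, M; ℝ⟯)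
    (X Y : VectorField I M) : C^(⊤ : ℕ∞)⟮I, M; ℝ⟯ :=
  (2 : ℝ)⁻¹ • (X (η Y) - Y (η X) - η ⁅X, Y⁆)

/-- The Nijenhuis torsion `[φ,φ](X,Y) = φ²[X,Y] + [φX,φY] - φ[φX,Y] - φ[X,φY]`. -/
def nijenhuis (φ : VectorField I M → VectorField I M) (X Y : VectorField I M) :
    VectorField I M :=
  φ (φ ⁅X, Y⁆) + ⁅φ X, φ Y⁆ - φ ⁅φ X, Y⁆ - φ ⁅X, φ Y⁆

/-- `N⁽¹⁾(X,Y) = [φ,φ](X,Y) + 2 dη(X,Y) Qξ`. -/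
def N1 (φ Q : VectorField I M →ₗ[C^(⊤ : ℕ∞)⟮I, M; ℝ⟯] VectorField I M)
    (ξ : VectorField I M) (η : VectorField I M →ₗ[C^(⊤ : ℕ∞)⟮I, M; ℝ⟯] C^(⊤ : ℕ∞)⟮I, M; ℝ⟯)
    (X Y : VectorField I M) : VectorField I M :=
  nijenhuis ⇑φ X Y + ((2 : ℝ) • dEta η X Y) • Q ξ

/-- `N⁽²⁾(X,Y) = (φX)(η(Y)) - η([φX,Y]) - (φY)(η(X)) + η([φY,X])`. -/
def N2 (φ : VectorField I M →ₗ[C^(⊤ : ℕ∞)⟮I, M; ℝ⟯] VectorField I M)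
    (η : VectorField I M →ₗ[C^(⊤ : ℕ∞)⟮I, M; ℝ⟯] C^(⊤ : ℕ∞)⟮I, M; ℝ⟯)
    (X Y : VectorField I M) : C^(⊤ : ℕ∞)⟮I, M; ℝ⟯ :=
  (φ X) (η Y) - η ⁅φ X, Y⁆ - (φ Y) (η X) + η ⁅φ Y, X⁆

/-!
`h(φX) + φ(hX)` telescopes to `½([ξ, φ²X] - φ²[ξ, X])`. Substituting `φ² = -Q + η ⊗ Qξ` with
`Qξ = νξ` leaves, besides `½(Q[ξ, X] - [ξ, QX])`, only the Reeb term
`ν (ξ(ηX) - η[ξ, X]) ξ = 2ν dη(ξ, X) ξ`. It vanishes since `dη(ξ, X) = -g(X, φξ)` and `φξ = 0`: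
`φ²ξ = 0`, and the contact condition gives `g(φξ, φξ) = dη(φξ, ξ) = -g(ξ, φ²ξ) = 0`.
-/

namespace Derivation

variable {R A : Type*} [CommRing R] [CommRing A] [Algebra R A]

theorem lie_smul_right (D₁ D₂ : Derivation R A A) (a : A) :
    ⁅D₁, a • D₂⁆ = D₁ a • D₂ + a • ⁅D₁, D₂⁆ := by
  ext b
  simp only [commutator_apply, smul_apply, add_apply, smul_eq_mul, leibniz]
  ring

end Derivation

section WeakContact

variable (η : VectorField I M →ₗ[C^(⊤ : ℕ∞)⟮I, M; ℝ⟯] C^(⊤ : ℕ∞)⟮I, M; ℝ⟯)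

theorem dEta_swap (X Y : VectorField I M) : dEta η Y X = -dEta η X Y := by
  rw [dEta, dEta, ← lie_skew X Y, map_neg, ← smul_neg]
  congr 1
  abel_nf

theorem dEta_of_eta_eq_one {ξ : VectorField I M} (hηξ : η ξ = 1) (X : VectorField I M) :
    dEta η ξ X = (2 : ℝ)⁻¹ • (ξ (η X) - η ⁅ξ, X⁆) := by
  rw [dEta, hηξ, Derivation.map_one_eq_zero, sub_zero]

variable {η} {φ : VectorField I M →ₗ[C^(⊤ : ℕ∞)⟮I, M; ℝ⟯] VectorField I M}
  {g : VectorField I M →ₗ[C^(⊤ : ℕ∞)⟮I, M; ℝ⟯] VectorField I M →ₗ[C^(⊤ : ℕ∞)⟮I, M; ℝ⟯]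
    C^(⊤ : ℕ∞)⟮I, M; ℝ⟯}

theorem phi_eq_zero_of_phi_phi_eq_zero (hg_def : ∀ X, g X X = 0 → X = 0)
    (hcontact : ∀ X Y, g X (φ Y) = dEta η X Y) {Y : VectorField I M} (hY : φ (φ Y) = 0) :
    φ Y = 0 :=
  hg_def _ <| calc
    g (φ Y) (φ Y) = dEta η (φ Y) Y := hcontact _ _
    _ = -g Y (φ (φ Y)) := by rw [dEta_swap, hcontact]
    _ = 0 := by rw [hY, map_zero, neg_zero]

theorem xi_eta_eq_eta_lie {ξ : VectorField I M} (hηξ : η ξ = 1) (hφξ : φ ξ = 0)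
    (hcontact : ∀ X Y, g X (φ Y) = dEta η X Y) (X : VectorField I M) :
    ξ (η X) = η ⁅ξ, X⁆ := by
  have h : dEta η ξ X = 0 := by rw [dEta_swap, ← hcontact, hφξ, map_zero, neg_zero]
  rw [dEta_of_eta_eq_one η hηξ, smul_eq_zero] at h
  exact sub_eq_zero.mp (h.resolve_left (by norm_num))

theorem lie_phi_phi_sub_phi_phi_lie
    {Q : VectorField I M →ₗ[C^(⊤ : ℕ∞)⟮I, M; ℝ⟯] VectorField I M} {ξ : VectorField I M}
    (hφφ : ∀ X, φ (φ X) = -(Q X) + η X • Q ξ) (hξQξ : ⁅ξ, Q ξ⁆ = 0)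
    (hξη : ∀ X, ξ (η X) = η ⁅ξ, X⁆) (X : VectorField I M) :
    ⁅ξ, φ (φ X)⁆ - φ (φ ⁅ξ, X⁆) = Q ⁅ξ, X⁆ - ⁅ξ, Q X⁆ := by
  rw [hφφ, hφφ, LieRing.lie_add, lie_neg (L := VectorField I M), Derivation.lie_smul_right,
    hξQξ, smul_zero, add_zero, hξη]
  abel_nf

variable (φ) in
def hTensor (ξ X : VectorField I M) : VectorField I M :=
  (2 : ℝ)⁻¹ • (⁅ξ, φ X⁆ - φ ⁅ξ, X⁆)

theorem hTensor_phi_add_phi_hTensor (ξ X : VectorField I M) :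
    hTensor φ ξ (φ X) + φ (hTensor φ ξ X) = (2 : ℝ)⁻¹ • (⁅ξ, φ (φ X)⁆ - φ (φ ⁅ξ, X⁆)) := by
  rw [hTensor, hTensor, LinearMap.map_smul_of_tower, map_sub, ← smul_add, sub_add_sub_cancel]

end WeakContact

theorem weak_contact_h_phi_anticommutator_general
    (φ Q : VectorField I M →ₗ[C^(⊤ : ℕ∞)⟮I, M; ℝ⟯] VectorField I M)
    (ξ : VectorField I M)
    (η : VectorField I M →ₗ[C^(⊤ : ℕ∞)⟮I, M; ℝ⟯] C^(⊤ : ℕ∞)⟮I, M; ℝ⟯)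
    (g : VectorField I M →ₗ[C^(⊤ : ℕ∞)⟮I, M; ℝ⟯] VectorField I M →ₗ[C^(⊤ : ℕ∞)⟮I, M; ℝ⟯] C^(⊤ : ℕ∞)⟮I, M; ℝ⟯)
    (ν : ℝ)
    (hφφ : ∀ X, φ (φ X) = -(Q X) + η X • Q ξ)
    (hηξ : η ξ = 1)
    (hQξ : Q ξ = ν • ξ)
    (hg_def : ∀ X, g X X = 0 → X = 0)
    (hcontact : ∀ X Y, g X (φ Y) = dEta η X Y)
    :
    ∀ X, (2 : ℝ)⁻¹ • (⁅ξ, φ (φ X)⁆ - φ ⁅ξ, φ X⁆) +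
        φ ((2 : ℝ)⁻¹ • (⁅ξ, φ X⁆ - φ ⁅ξ, X⁆)) =
      (2 : ℝ)⁻¹ • (⁅Q X - X, ξ⁆ - (Q ⁅X, ξ⁆ - ⁅X, ξ⁆)) := by
  intro X
  have hφξ : φ ξ = 0 :=
    phi_eq_zero_of_phi_phi_eq_zero hg_def hcontact (by rw [hφφ, hηξ, one_smul, neg_add_cancel])
  have hξQξ : ⁅ξ, Q ξ⁆ = 0 := by rw [hQξ, lie_smul ν ξ ξ, lie_self, smul_zero]
  change hTensor φ ξ (φ X) + φ (hTensor φ ξ X) = _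
  rw [hTensor_phi_add_phi_hTensor,
    lie_phi_phi_sub_phi_phi_lie hφφ hξQξ (xi_eta_eq_eta_lie hηξ hφξ hcontact),
    sub_lie (L := VectorField I M) (M := VectorField I M), ← lie_skew ξ (Q X), ← lie_skew ξ X,
    map_neg]
  abel_nf

theorem weak_contact_h_phi_anticommutator
    [FiniteDimensional ℝ E] [I.Boundaryless] [IsManifold I (⊤ : ℕ∞) M]
    (n : ℕ) (hn : 1 ≤ n) (hdim : Module.finrank ℝ E = 2 * n + 1)
    (φ Q : VectorField I M →ₗ[C^(⊤ : ℕ∞)⟮I, M; ℝ⟯] VectorField I M)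
    (hQ : Function.Bijective Q)
    (ξ : VectorField I M)
    (η : VectorField I M →ₗ[C^(⊤ : ℕ∞)⟮I, M; ℝ⟯] C^(⊤ : ℕ∞)⟮I, M; ℝ⟯)
    (g : VectorField I M →ₗ[C^(⊤ : ℕ∞)⟮I, M; ℝ⟯] VectorField I M →ₗ[C^(⊤ : ℕ∞)⟮I, M; ℝ⟯] C^(⊤ : ℕ∞)⟮I, M; ℝ⟯)
    (ν : ℝ) (hν : 0 < ν)
    (hφφ : ∀ X, φ (φ X) = -(Q X) + η X • Q ξ)
    (hηξ : η ξ = 1)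
    (hQξ : Q ξ = ν • ξ)
    (hD : ∀ X, η X = 0 → η (φ X) = 0)
    (hg_symm : ∀ X Y, g X Y = g Y X)
    (hg_pos : ∀ X (x : M), 0 ≤ g X X x)
    (hg_def : ∀ X, g X X = 0 → X = 0)
    (hcompat : ∀ X Y, g (φ X) (φ Y) = g X (Q Y) - η X * η (Q Y))
    (hcontact : ∀ X Y, g X (φ Y) = dEta η X Y)
    :
    ∀ X, (2 : ℝ)⁻¹ • (⁅ξ, φ (φ X)⁆ - φ ⁅ξ, φ X⁆) +
        φ ((2 : ℝ)⁻¹ • (⁅ξ, φ X⁆ - φ ⁅ξ, X⁆)) =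
      (2 : ℝ)⁻¹ • (⁅Q X - X, ξ⁆ - (Q ⁅X, ξ⁆ - ⁅X, ξ⁆)) :=
  weak_contact_h_phi_anticommutator_general φ Q ξ η g ν hφφ hηξ hQξ hg_def hcontact
end
end

section
/- A weak Sasakian manifold is weak K-contact: if (φ,Q,ξ,η,g) is a weak Sasakian structure on M (i.e., a weak contact metric structure with N⁽¹⁾ ≡ 0), then ξ is a Killing vector field, i.e., ξ(g(X,Y)) = g([ξ,X],Y) + g(X,[ξ,Y]) for all smooth vector fields X,Y. -/
open scoped Manifold

noncomputable section

variable {E : Type*} [NormedAddCommGroup E] [NormedSpace ℝ E]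
  {H : Type*} [TopologicalSpace H] {I : ModelWithCorners ℝ E H}
  {M : Type*} [TopologicalSpace M] [ChartedSpace H M]

/-! On a weak Sasakian manifold `φ ξ = 0`, hence `ι_ξ dη = 0`; as `η ξ = 1`, Cartan's formula gives
`L_ξ η = 0` and so `L_ξ dη = 0`. The `ξ`-component of `N⁽¹⁾ = 0` shows `L_ξ φ = 0`, so
`L_ξ g (X, φ Y) = (L_ξ Φ)(X, Y) = (L_ξ dη)(X, Y) = 0`. Also `L_ξ g (X, ξ) = 0` because `g (X, ξ) = η X`.
Since `L_ξ g` is tensorial and every field is `Q Z = ν (η Z) ξ - φ² Z`, `L_ξ g` vanishes. -/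

theorem Derivation.commutator_smul_right {R A : Type*} [CommRing R] [CommRing A] [Algebra R A]
    (D₁ D₂ : Derivation R A A) (a : A) :
    ⁅D₁, a • D₂⁆ = a • ⁅D₁, D₂⁆ + D₁ a • D₂ := by
  ext b
  simp only [Derivation.commutator_apply, Derivation.add_apply, Derivation.smul_apply,
    smul_eq_mul, Derivation.leibniz]
  ring

/-- Stated for a general `A` so that `rw` matches the `Derivation` bracket; on vector fields `zero_lie`
does not unify in reasonable time. -/
theorem Derivation.zero_commutator {R A : Type*} [CommRing R] [CommRing A] [Algebra R A]
    (D : Derivation R A A) : ⁅(0 : Derivation R A A), D⁆ = 0 :=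
  zero_lie D

theorem ContMDiffMap.eq_zero_of_mul_self_eq_zero {n : WithTop ℕ∞} (f : C^n⟮I, M; ℝ⟯)
    (hf : f * f = 0) : f = 0 := by
  ext x
  exact mul_self_eq_zero.mp (congrArg (fun h : C^n⟮I, M; ℝ⟯ => h x) hf)

local notation "𝓕" => C^(⊤ : ℕ∞)⟮I, M; ℝ⟯
local notation "𝔛" => VectorField I M

theorem dEta_antisymm (η : 𝔛 →ₗ[𝓕] 𝓕) (X Y : 𝔛) : dEta η Y X = -dEta η X Y := by
  rw [dEta, dEta, ← smul_neg, ← lie_skew, map_neg]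
  congr 1
  abel

section Forms

variable {η : VectorField I M →ₗ[C^(⊤ : ℕ∞)⟮I, M; ℝ⟯] C^(⊤ : ℕ∞)⟮I, M; ℝ⟯} {ξ : VectorField I M}

theorem apply_eta_eq_of_dEta_left_eq_zero (hηξ : η ξ = 1) {Y : 𝔛} (h : dEta η ξ Y = 0) :
    ξ (η Y) = η ⁅ξ, Y⁆ := by
  rw [dEta, hηξ, Derivation.map_one_eq_zero, sub_zero, smul_eq_zero] at h
  exact sub_eq_zero.mp (h.resolve_left (by norm_num))

theorem apply_dEta_eq_of_apply_eta_eq (hη : ∀ Y, ξ (η Y) = η ⁅ξ, Y⁆) (X Y : 𝔛) :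
    ξ (dEta η X Y) = dEta η ⁅ξ, X⁆ Y + dEta η X ⁅ξ, Y⁆ := by
  simp only [dEta, Derivation.map_smul, ← smul_add, map_sub, Derivation.commutator_apply,
    hη, LieRing.leibniz_lie ξ X Y, map_add]
  congr 1
  abel

end Forms

/-- The Lie derivative `(L_ξ g)(X, ·)` of a bilinear form `g`. -/
def lieDerivBilin (ξ : 𝔛) (g : 𝔛 →ₗ[𝓕] 𝔛 →ₗ[𝓕] 𝓕) (X : 𝔛) : 𝔛 →ₗ[𝓕] 𝓕 where
  toFun Y := ξ (g X Y) - g ⁅ξ, X⁆ Y - g X ⁅ξ, Y⁆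
  map_add' Y Z := by
    simp only [map_add, LieRing.lie_add]
    abel
  map_smul' f Y := by
    simp only [map_smul, Derivation.commutator_smul_right, map_add, smul_eq_mul,
      Derivation.leibniz, RingHom.id_apply]
    ring

theorem lieDerivBilin_apply (ξ : 𝔛) (g : 𝔛 →ₗ[𝓕] 𝔛 →ₗ[𝓕] 𝓕) (X Y : 𝔛) :
    lieDerivBilin ξ g X Y = ξ (g X Y) - g ⁅ξ, X⁆ Y - g X ⁅ξ, Y⁆ :=
  rfl

section WeakContact

variable {φ Q : VectorField I M →ₗ[C^(⊤ : ℕ∞)⟮I, M; ℝ⟯] VectorField I M} {ξ : VectorField I M}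
  {η : VectorField I M →ₗ[C^(⊤ : ℕ∞)⟮I, M; ℝ⟯] C^(⊤ : ℕ∞)⟮I, M; ℝ⟯}
  {g : VectorField I M →ₗ[C^(⊤ : ℕ∞)⟮I, M; ℝ⟯] VectorField I M →ₗ[C^(⊤ : ℕ∞)⟮I, M; ℝ⟯]
    C^(⊤ : ℕ∞)⟮I, M; ℝ⟯} {ν : ℝ}

theorem phi_phi_xi_eq_zero (hφφ : ∀ X, φ (φ X) = -(Q X) + η X • Q ξ) (hηξ : η ξ = 1) :
    φ (φ ξ) = 0 := by
  rw [hφφ, hηξ, one_smul, neg_add_cancel]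

theorem eta_phi_eq_zero (hφφ : ∀ X, φ (φ X) = -(Q X) + η X • Q ξ) (hηξ : η ξ = 1)
    (hD : ∀ X, η X = 0 → η (φ X) = 0) (X : 𝔛) : η (φ X) = 0 := by
  have hsplit : ∀ X, η (φ X) = η X * η (φ ξ) := fun X => by
    have := hD (X - η X • ξ) (by rw [map_sub, map_smul, hηξ, smul_eq_mul, mul_one, sub_self])
    rwa [map_sub, map_smul, map_sub, map_smul, smul_eq_mul, sub_eq_zero] at this
  have hηφξ : η (φ ξ) = 0 := by
    apply ContMDiffMap.eq_zero_of_mul_self_eq_zero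
    rw [← hsplit, phi_phi_xi_eq_zero hφφ hηξ, map_zero]
  rw [hsplit, hηφξ, mul_zero]

theorem phi_xi_eq_zero (hφφ : ∀ X, φ (φ X) = -(Q X) + η X • Q ξ) (hηξ : η ξ = 1)
    (hg_def : ∀ X, g X X = 0 → X = 0) (hcontact : ∀ X Y, g X (φ Y) = dEta η X Y) :
    φ ξ = 0 := by
  apply hg_def
  rw [hcontact, dEta_antisymm, ← hcontact, phi_phi_xi_eq_zero hφφ hηξ, map_zero, neg_zero]

theorem dEta_xi_left_eq_zero (hcontact : ∀ X Y, g X (φ Y) = dEta η X Y) (hφξ : φ ξ = 0)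
    (Y : 𝔛) : dEta η ξ Y = 0 := by
  rw [← neg_eq_zero, ← dEta_antisymm, ← hcontact, hφξ, map_zero]

theorem metric_xi_eq_eta (hν : 0 < ν) (hηξ : η ξ = 1) (hQξ : Q ξ = ν • ξ)
    (hcompat : ∀ X Y, g (φ X) (φ Y) = g X (Q Y) - η X * η (Q Y)) (hφξ : φ ξ = 0) (X : 𝔛) :
    g X ξ = η X := by
  have h := hcompat X ξ
  rw [hφξ, map_zero, hQξ, LinearMap.map_smul_of_tower, LinearMap.map_smul_of_tower, hηξ,
    mul_smul_comm, mul_one, eq_comm, sub_eq_zero] at h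
  exact smul_right_injective _ hν.ne' h

theorem eq_zero_of_phi_phi_eq_zero (hφφ : ∀ X, φ (φ X) = -(Q X) + η X • Q ξ)
    (hQ : Function.Injective Q) {W : 𝔛} (hφW : φ (φ W) = 0) (hηW : η W = 0) : W = 0 := by
  rw [hφφ, hηW, zero_smul, add_zero, neg_eq_zero] at hφW
  exact hQ (hφW.trans (map_zero Q).symm)

/-- `N⁽¹⁾(ξ, Y) = φ W` for `W = φ [ξ, Y] - [ξ, φ Y]`, and `φ² W = 0`, `η W = 0` force `W = 0`. -/
theorem lie_xi_phi_eq (hφφ : ∀ X, φ (φ X) = -(Q X) + η X • Q ξ) (hQ : Function.Injective Q)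
    (hN1 : ∀ X Y, N1 φ Q ξ η X Y = 0) (hφξ : φ ξ = 0) (hdξ : ∀ Y, dEta η ξ Y = 0)
    (hηφ : ∀ X, η (φ X) = 0) (hη : ∀ Y, ξ (η Y) = η ⁅ξ, Y⁆) (Y : 𝔛) :
    ⁅ξ, φ Y⁆ = φ ⁅ξ, Y⁆ := by
  have hN := hN1 ξ Y
  rw [N1, nijenhuis, hφξ, hdξ, smul_zero, zero_smul, add_zero, Derivation.zero_commutator,
    Derivation.zero_commutator, map_zero, add_zero, sub_zero, ← map_sub] at hN
  refine (sub_eq_zero.mp (eq_zero_of_phi_phi_eq_zero hφφ hQ ?_ ?_)).symm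
  · rw [hN, map_zero]
  · rw [map_sub, hηφ, ← hη, hηφ, map_zero, sub_zero]

theorem lieDerivBilin_phi_right (hcontact : ∀ X Y, g X (φ Y) = dEta η X Y)
    (hLφ : ∀ Y, ⁅ξ, φ Y⁆ = φ ⁅ξ, Y⁆) (hη : ∀ Y, ξ (η Y) = η ⁅ξ, Y⁆) (X Y : 𝔛) :
    lieDerivBilin ξ g X (φ Y) = 0 := by
  rw [lieDerivBilin_apply, hLφ, hcontact, hcontact, hcontact, apply_dEta_eq_of_apply_eta_eq hη,
    sub_sub, sub_self]

theorem lieDerivBilin_xi_right (hgξ : ∀ X, g X ξ = η X) (hη : ∀ Y, ξ (η Y) = η ⁅ξ, Y⁆)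
    (X : 𝔛) : lieDerivBilin ξ g X ξ = 0 := by
  rw [lieDerivBilin_apply, lie_self, map_zero, hgξ, hgξ, hη, sub_self, sub_zero]

theorem Q_eq_smul_xi_sub_phi_phi (hφφ : ∀ X, φ (φ X) = -(Q X) + η X • Q ξ)
    (hQξ : Q ξ = ν • ξ) (Z : 𝔛) : Q Z = (ν • η Z) • ξ - φ (φ Z) := by
  rw [hφφ, hQξ, smul_comm, smul_assoc]
  abel

end WeakContact

theorem weak_Sasakian_is_K_contact_general
    (φ Q : VectorField I M →ₗ[C^(⊤ : ℕ∞)⟮I, M; ℝ⟯] VectorField I M)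
    (hQ : Function.Bijective Q)
    (ξ : VectorField I M)
    (η : VectorField I M →ₗ[C^(⊤ : ℕ∞)⟮I, M; ℝ⟯] C^(⊤ : ℕ∞)⟮I, M; ℝ⟯)
    (g : VectorField I M →ₗ[C^(⊤ : ℕ∞)⟮I, M; ℝ⟯] VectorField I M →ₗ[C^(⊤ : ℕ∞)⟮I, M; ℝ⟯] C^(⊤ : ℕ∞)⟮I, M; ℝ⟯)
    (ν : ℝ) (hν : 0 < ν)
    (hφφ : ∀ X, φ (φ X) = -(Q X) + η X • Q ξ)
    (hηξ : η ξ = 1)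
    (hQξ : Q ξ = ν • ξ)
    (hD : ∀ X, η X = 0 → η (φ X) = 0)
    (hg_def : ∀ X, g X X = 0 → X = 0)
    (hcompat : ∀ X Y, g (φ X) (φ Y) = g X (Q Y) - η X * η (Q Y))
    (hcontact : ∀ X Y, g X (φ Y) = dEta η X Y)
    (hN1 : ∀ X Y, N1 φ Q ξ η X Y = 0)
    :
    ∀ X Y, ξ (g X Y) = g ⁅ξ, X⁆ Y + g X ⁅ξ, Y⁆ := by
  intro X Y
  have hφξ := phi_xi_eq_zero hφφ hηξ hg_def hcontact
  have hdξ := dEta_xi_left_eq_zero hcontact hφξ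
  have hη : ∀ Y, ξ (η Y) = η ⁅ξ, Y⁆ := fun Y => apply_eta_eq_of_dEta_left_eq_zero hηξ (hdξ Y)
  have hLφ := lie_xi_phi_eq hφφ hQ.injective hN1 hφξ hdξ (eta_phi_eq_zero hφφ hηξ hD) hη
  have hgξ := metric_xi_eq_eta hν hηξ hQξ hcompat hφξ
  obtain ⟨Z, rfl⟩ := hQ.surjective Y
  have hKilling : lieDerivBilin ξ g X (Q Z) = 0 := by
    rw [Q_eq_smul_xi_sub_phi_phi hφφ hQξ, map_sub, map_smul, lieDerivBilin_xi_right hgξ hη,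
      lieDerivBilin_phi_right hcontact hLφ hη, smul_zero, sub_zero]
  rwa [lieDerivBilin_apply, sub_sub, sub_eq_zero] at hKilling

theorem weak_Sasakian_is_K_contact
    [FiniteDimensional ℝ E] [I.Boundaryless] [IsManifold I (⊤ : ℕ∞) M]
    (n : ℕ) (hn : 1 ≤ n) (hdim : Module.finrank ℝ E = 2 * n + 1)
    (φ Q : VectorField I M →ₗ[C^(⊤ : ℕ∞)⟮I, M; ℝ⟯] VectorField I M)
    (hQ : Function.Bijective Q)
    (ξ : VectorField I M)
    (η : VectorField I M →ₗ[C^(⊤ : ℕ∞)⟮I, M; ℝ⟯] C^(⊤ : ℕ∞)⟮I, M; ℝ⟯)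
    (g : VectorField I M →ₗ[C^(⊤ : ℕ∞)⟮I, M; ℝ⟯] VectorField I M →ₗ[C^(⊤ : ℕ∞)⟮I, M; ℝ⟯] C^(⊤ : ℕ∞)⟮I, M; ℝ⟯)
    (ν : ℝ) (hν : 0 < ν)
    (hφφ : ∀ X, φ (φ X) = -(Q X) + η X • Q ξ)
    (hηξ : η ξ = 1)
    (hQξ : Q ξ = ν • ξ)
    (hD : ∀ X, η X = 0 → η (φ X) = 0)
    (hg_symm : ∀ X Y, g X Y = g Y X)
    (hg_pos : ∀ X (x : M), 0 ≤ g X X x)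
    (hg_def : ∀ X, g X X = 0 → X = 0)
    (hcompat : ∀ X Y, g (φ X) (φ Y) = g X (Q Y) - η X * η (Q Y))
    (hcontact : ∀ X Y, g X (φ Y) = dEta η X Y)
    (hN1 : ∀ X Y, N1 φ Q ξ η X Y = 0)
    :
    ∀ X Y, ξ (g X Y) = g ⁅ξ, X⁆ Y + g X ⁅ξ, Y⁆ :=
  weak_Sasakian_is_K_contact_general φ Q hQ ξ η g ν hν hφφ hηξ hQξ hD hg_def hcompat hcontact hN1
end
end
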